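/- arXiv:1708.06785 — 5 statements merged into one kernel-verified Lean document; each statement's English description precedes it below -/
import Mathlib

section
/- In the discrete-time dual risk model, for integers u ≥ 1 and n ≥ u, the probability that the reserve process started at u first hits level zero exactly at time n is P_u(τ* = n) = (u/n)·p^{*n}_{n−u}, where p^{*n}_k = P(Y_1 + … + Y_n = k) is the n-fold convolution of the p.m.f. of Y_1. -/
open MeasureTheory ProbabilityTheory

noncomputable section

variable {Ω : Type*} [MeasurableSpace Ω]

/-- The reserve process of the discrete-time dual risk model with initial capital `u`:
`R*_n = u - n + ∑_{i=1}^n Y_i`. -/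
def reserve (Y : ℕ → Ω → ℕ) (u : ℤ) (n : ℕ) (ω : Ω) : ℤ :=
  u - n + ∑ i ∈ Finset.range n, (Y i ω : ℤ)

/-- The probability mass function of the gain size distribution: `p_k = P(Y_1 = k)`. -/
def gainPMF (μ : Measure Ω) (Y : ℕ → Ω → ℕ) (k : ℕ) : ℝ :=
  (μ {ω | Y 0 ω = k}).toReal

/-- The `n`-fold convolution of the gain size pmf: `p^{*n}_k = P(Y_1 + ⋯ + Y_n = k)`
(with `p^{*0}_k = 1` iff `k = 0`, automatically, since the empty sum is `0`). -/
def conv (μ : Measure Ω) (Y : ℕ → Ω → ℕ) (n k : ℕ) : ℝ :=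
  (μ {ω | ∑ i ∈ Finset.range n, Y i ω = k}).toReal

/-- The gains `(Y_i)` are i.i.d. (and measurable). -/
def IsIID (μ : Measure Ω) (Y : ℕ → Ω → ℕ) : Prop :=
  (∀ i, Measurable (Y i)) ∧
    iIndepFun Y μ ∧ ∀ i, IdentDistrib (Y i) (Y 0) μ μ

/-- Net profit condition: `μ = E[Y_1] > 1` (in particular the mean is finite). -/
def NetProfit (μ : Measure Ω) (Y : ℕ → Ω → ℕ) : Prop :=
  Integrable (fun ω => (Y 0 ω : ℝ)) μ ∧ 1 < ∫ ω, (Y 0 ω : ℝ) ∂μ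

/-- Parisian ruin with delay `r` happens, with the deficit window starting with a
down-crossing (from level `0` to level `-1`) at time `s`: the reserve stays strictly
negative throughout the `r + 1` consecutive periods `s, s+1, …, s+r`. -/
def parisianWindow (Y : ℕ → Ω → ℕ) (u : ℤ) (r s : ℕ) (ω : Ω) : Prop :=
  1 ≤ s ∧ reserve Y u (s - 1) ω = 0 ∧ reserve Y u s ω = -1 ∧
    ∀ m, s ≤ m → m ≤ s + r → reserve Y u m ω < 0

/-- Finite-time Parisian ruin probability `ψ*_r(u,t) = P_u(τ^r < t)`:
the Parisian ruin time `τ^r = s + r` exceeds some down-crossing time `s` by `r`. -/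
def parisianRuinBy (μ : Measure Ω) (Y : ℕ → Ω → ℕ) (u : ℤ) (r t : ℕ) : ℝ :=
  (μ {ω | ∃ s, parisianWindow Y u r s ω ∧ s + r < t}).toReal

/-- Infinite-time Parisian ruin probability `ψ*_r(u) = P_u(τ^r < ∞)`. -/
def parisianRuin (μ : Measure Ω) (Y : ℕ → Ω → ℕ) (u : ℤ) (r : ℕ) : ℝ :=
  (μ {ω | ∃ s, parisianWindow Y u r s ω}).toReal

/-- Infinite-time dual ruin probability `ψ*(u) = P_u(τ* < ∞)`, where
`τ* = inf{n : R*_n = 0}`. -/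
def dualRuinProb (μ : Measure Ω) (Y : ℕ → Ω → ℕ) (u : ℤ) : ℝ :=
  (μ {ω | ∃ n, reserve Y u n ω = 0}).toReal

/-- The event `{τ* = n}` for the dual risk model started at `u`:
the reserve first hits level `0` exactly at time `n`. -/
def dualRuinAt (Y : ℕ → Ω → ℕ) (u : ℤ) (n : ℕ) : Set Ω :=
  {ω | reserve Y u n ω = 0 ∧ ∀ m < n, reserve Y u m ω ≠ 0}

/-- The event `{τ⁻ = n, R*_{τ⁻} = k}` for the process started at `-1`: the recovery
(first return to a non-negative level) happens at time `n` with level `k` at recovery. -/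
def recoveryAt (Y : ℕ → Ω → ℕ) (n k : ℕ) : Set Ω :=
  {ω | reserve Y (-1) n ω = (k : ℤ) ∧ ∀ s < n, reserve Y (-1) s ω < 0}

/-- `P_{-1}(τ⁻ ≤ r, R*_{τ⁻} = k)`: starting from `-1`, recovery happens within `r`
periods, with level `k` at recovery. -/
def recoveryWithinProb (μ : Measure Ω) (Y : ℕ → Ω → ℕ) (r k : ℕ) : ℝ :=
  (μ {ω | ∃ n, 1 ≤ n ∧ n ≤ r ∧ reserve Y (-1) n ω = (k : ℤ) ∧
      ∀ s < n, reserve Y (-1) s ω < 0}).toReal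

/-- Finite-time survival probability `φ(v,t)` of the compound binomial risk process
`R_n = v + n - ∑_{i=1}^n Y_i`. -/
def classicalSurvival (μ : Measure Ω) (Y : ℕ → Ω → ℕ) (v : ℕ) (t : ℕ) : ℝ :=
  (μ {ω | ∀ n < t, 0 < (v : ℤ) + n - ∑ i ∈ Finset.range n, (Y i ω : ℤ)}).toReal

/-!
Only the first `n` gains matter, and their joint law is invariant under cyclic rotations.
The walk `m ↦ m - (y₀ + ⋯ + y_{m-1})` of a gain vector moves up by at most one per step;
if it ends at `u` after `n` steps, then by the cycle lemma exactly `u` of its `n` cyclic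
rotations reach `u` for the first time at step `n`. Averaging over the rotations gives
`n · P(τ* = n) = u · P(Y₁ + ⋯ + Yₙ = n - u)`.
-/

open Finset
open scoped ENNReal

section SkipFreeWalk

variable {C : ℕ → ℤ} {n u : ℕ}

abbrev IsRecord (C : ℕ → ℤ) (i : ℕ) : Prop :=
  ∀ l < i, C l < C i

lemma forall_lt_of_forall_ne {f : ℕ → ℤ} {v : ℤ} (hstep : ∀ m, f (m + 1) ≤ f m + 1)
    (h0 : f 0 < v) (hne : ∀ m < n, f m ≠ v) : ∀ m < n, f m < v := by
  intro m hm
  induction m with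
  | zero => exact h0
  | succ k ih =>
    have := ih (by omega)
    have := hstep k
    have := hne (k + 1) hm
    omega

lemma exists_first_eq_of_le (hstep : ∀ m, C (m + 1) ≤ C m + 1) {v : ℤ} (h0 : C 0 < v)
    (hreach : ∃ m, v ≤ C m) : ∃ i, C i = v ∧ ∀ l < i, C l < v := by
  classical
  have hmin : ∀ l < Nat.find hreach, C l < v := fun l hl => not_le.mp (Nat.find_min hreach hl)
  refine ⟨Nat.find hreach, ?_, hmin⟩
  obtain ⟨i, hi⟩ : ∃ i, Nat.find hreach = i + 1 := Nat.exists_eq_succ_of_ne_zero fun h => by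
    have := Nat.find_spec hreach
    rw [h] at this
    omega
  have := Nat.find_spec hreach
  have := hmin i (by omega)
  have := hstep i
  rw [hi] at *
  omega

lemma isRecord_add_iff (hper : ∀ m, C (m + n) = C m + u) {j : ℕ} (hj : j < n) :
    IsRecord C (j + n) ↔ ∀ m < n, C (j + m) < C j + u := by
  rw [IsRecord, hper]
  refine ⟨fun h m hm => h (j + m) (by omega), fun h l hl => ?_⟩
  rcases le_or_gt j l with hjl | hlj
  · simpa [Nat.add_sub_cancel' hjl] using h (l - j) (by omega)
  · have := h (l + n - j) (by omega)
    rw [show j + (l + n - j) = l + n by omega, hper] at this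
    omega

/-- The records of `C` in `[n, 2n)` are the first passages through the `u` levels just above
`max_{k < n} C k`. -/
lemma card_records (hstep : ∀ m, C (m + 1) ≤ C m + 1) (hper : ∀ m, C (m + n) = C m + u)
    (hn : 0 < n) : #{i ∈ Ico n (2 * n) | IsRecord C i} = u := by
  have hne : (range n).Nonempty := nonempty_range_iff.mpr hn.ne'
  set M := (range n).sup' hne C
  have hle : ∀ k < n, C k ≤ M := fun k hk => le_sup' C (mem_range.mpr hk)
  obtain ⟨l₀, hl₀, hM⟩ := exists_mem_eq_sup' hne C
  rw [mem_range] at hl₀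
  rw [← Int.toNat_natCast u, ← add_sub_cancel_left M u, ← Int.card_Ioc]
  refine card_bij (fun i _ => C i) (fun i hi => ?_) (fun a ha b hb hab => ?_) fun v hv => ?_
  · simp only [mem_filter, mem_Ico] at hi
    have := hper (i - n)
    rw [Nat.sub_add_cancel hi.1.1] at this
    have := hle (i - n) (by omega)
    have := hi.2 l₀ (by omega)
    simp only [mem_Ioc]
    omega
  · simp only [mem_filter] at ha hb
    rcases lt_trichotomy a b with h | h | h
    · exact absurd hab (hb.2 a h).ne
    · exact h
    · exact absurd hab (ha.2 b h).ne'
  · simp only [mem_Ioc] at hv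
    have hreach : v ≤ C (l₀ + n) := by rw [hper, ← hM]; omega
    obtain ⟨i, hCi, hbelow⟩ := exists_first_eq_of_le hstep (by linarith [hle 0 hn]) ⟨_, hreach⟩
    have hni : n ≤ i := by
      by_contra h
      linarith [hle i (by omega)]
    have hi2n : i < 2 * n := by
      by_contra h
      linarith [hbelow (l₀ + n) (by omega)]
    exact ⟨i, by simpa [IsRecord, hni, hi2n, hCi] using hbelow, hCi⟩

/-- **Cycle lemma** (Dvoretzky–Motzkin). -/
lemma card_cycle (hstep : ∀ m, C (m + 1) ≤ C m + 1) (hper : ∀ m, C (m + n) = C m + u)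
    (hn : 0 < n) : #{j ∈ range n | ∀ m < n, C (j + m) < C j + u} = u := by
  calc #{j ∈ range n | ∀ m < n, C (j + m) < C j + u}
      = #{j ∈ range n | IsRecord C (j + n)} := by
        rw [filter_congr fun j hj => (isRecord_add_iff hper (mem_range.mp hj)).symm]
    _ = #{i ∈ (range n).map (addRightEmbedding n) | IsRecord C i} := by
        rw [filter_map, card_map]; rfl
    _ = u := by
        rw [range_eq_Ico, map_add_right_Ico, zero_add, ← two_mul]
        exact card_records hstep hper hn

end SkipFreeWalk

section CyclicWalk

variable {n : ℕ}

/-- Indices live in `ZMod n`, so a gain vector is read `n`-periodically and a cyclic rotation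
becomes a shift of the walk; for `m ≤ n` the reserve process is `R*_m = u - walk m`. -/
def walk (x : ZMod n → ℕ) (m : ℕ) : ℤ :=
  m - ∑ i ∈ range m, (x i : ℤ)

def rotate (j : ℕ) (x : ZMod n → ℕ) : ZMod n → ℕ :=
  fun i => x (i + j)

def firstHit (u : ℕ) : Set (ZMod n → ℕ) :=
  {x | walk x n = u ∧ ∀ m < n, walk x m ≠ u}

variable (x : ZMod n → ℕ)

lemma walk_succ (m : ℕ) : walk x (m + 1) = walk x m + 1 - x m := by
  simp only [walk, sum_range_succ]
  push_cast
  ring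

lemma walk_succ_le (m : ℕ) : walk x (m + 1) ≤ walk x m + 1 := by
  rw [walk_succ]
  omega

lemma walk_add_period (m : ℕ) : walk x (m + n) = walk x m + walk x n := by
  induction m with
  | zero => simp [walk]
  | succ k ih =>
    rw [Nat.add_right_comm, walk_succ, ih, walk_succ]
    push_cast
    rw [ZMod.natCast_self, add_zero]
    ring

lemma walk_rotate (j m : ℕ) : walk (rotate j x) m = walk x (j + m) - walk x j := by
  simp only [walk, rotate, sum_range_add]
  push_cast
  simp only [add_comm]
  ring

lemma walk_rotate_period (j : ℕ) : walk (rotate j x) n = walk x n := by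
  rw [walk_rotate, walk_add_period]
  ring

lemma rotate_mem_firstHit_iff {u : ℕ} (hu : 0 < u) (hx : walk x n = u) (j : ℕ) :
    rotate j x ∈ firstHit u ↔ ∀ m < n, walk x (j + m) < walk x j + u := by
  simp only [firstHit, Set.mem_ofPred_eq, walk_rotate_period, hx, true_and, walk_rotate]
  refine ⟨fun h m hm => ?_, fun h m hm => by linarith [h m hm]⟩
  have := forall_lt_of_forall_ne (f := walk (rotate j x)) (v := u) (walk_succ_le _)
    (by simp [walk, hu]) (fun m hm => by rw [walk_rotate]; exact h m hm) m hm
  rw [walk_rotate] at this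
  linarith

open scoped Classical in
lemma card_rotate_mem_firstHit {u : ℕ} (hu : 0 < u) (hx : walk x n = u) :
    #{j ∈ range n | rotate j x ∈ firstHit u} = u := by
  rw [filter_congr fun j _ => rotate_mem_firstHit_iff x hu hx j]
  exact card_cycle (walk_succ_le x) (fun m => by rw [walk_add_period, hx])
    (Nat.pos_of_ne_zero fun h => by simp [h, walk] at hx; omega)

end CyclicWalk

section CyclicExchangeability

variable {n : ℕ} [NeZero n]

theorem mul_measure_firstHit_eq {ν : Measure (ZMod n → ℕ)}
    (hν : ∀ j, MeasurePreserving (rotate j) ν ν) {u : ℕ} (hu : 0 < u) :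
    n * ν (firstHit u) = u * ν {x | walk x n = u} := by
  classical
  have hcount (x : ZMod n → ℕ) : ∑ j ∈ range n, (rotate j ⁻¹' firstHit u).indicator 1 x
      = (u : ℝ≥0∞) * {x | walk x n = u}.indicator 1 x := by
    simp only [Set.indicator_apply, Set.mem_preimage, Pi.one_apply, sum_boole, mul_ite,
      mul_one, mul_zero]
    split_ifs with hx
    · rw [card_rotate_mem_firstHit x hu hx]
    · rw [filter_false_of_mem fun j _ h => hx (by simpa [walk_rotate_period] using h.1),
        card_empty, Nat.cast_zero]
  calc (n : ℝ≥0∞) * ν (firstHit u)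
      = ∑ j ∈ range n, ν (rotate j ⁻¹' firstHit u) := by
        simp [(hν _).measure_preimage MeasurableSet.of_discrete.nullMeasurableSet]
    _ = ∫⁻ x, ∑ j ∈ range n, (rotate j ⁻¹' firstHit u).indicator 1 x ∂ν := by
        rw [lintegral_finsetSum' _ fun _ _ => Measurable.of_discrete.aemeasurable]
        simp [lintegral_indicator_one MeasurableSet.of_discrete]
    _ = u * ν {x | walk x n = u} := by
        simp only [hcount, lintegral_const_mul' _ _ (ENNReal.natCast_ne_top u),
          lintegral_indicator_one MeasurableSet.of_discrete]

lemma measurePreserving_rotate_pi (p : Measure ℕ) [SigmaFinite p] (j : ℕ) :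
    MeasurePreserving (rotate j) (Measure.pi fun _ : ZMod n => p) (Measure.pi fun _ => p) :=
  measurePreserving_arrowCongr' _ _ (Equiv.addRight (j : ZMod n)).symm (MeasurableEquiv.refl ℕ)
    fun _ => MeasurePreserving.id p

end CyclicExchangeability

section DualRiskModel

variable {n : ℕ} {Y : ℕ → Ω → ℕ}

omit [MeasurableSpace Ω] in
lemma reserve_eq_sub_walk (u : ℤ) {m : ℕ} (hm : m ≤ n) (ω : Ω) :
    reserve Y u m ω = u - walk (fun i : ZMod n => Y i.val ω) m := by
  have hsum : ∑ i ∈ range m, (Y (i : ZMod n).val ω : ℤ) = ∑ i ∈ range m, (Y i ω : ℤ) :=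
    sum_congr rfl fun i hi => by
      rw [ZMod.val_natCast, Nat.mod_eq_of_lt (by linarith [mem_range.mp hi])]
  rw [reserve, walk, hsum]
  ring

omit [MeasurableSpace Ω] in
lemma dualRuinAt_eq_preimage (u : ℕ) :
    dualRuinAt Y u n = (fun ω (i : ZMod n) => Y i.val ω) ⁻¹' firstHit u := by
  ext ω
  simp only [dualRuinAt, firstHit, Set.mem_ofPred_eq, Set.mem_preimage,
    reserve_eq_sub_walk _ (le_refl n), sub_eq_zero]
  refine and_congr eq_comm (forall₂_congr fun m hm => ?_)
  rw [reserve_eq_sub_walk _ hm.le, sub_ne_zero, ne_comm]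

omit [MeasurableSpace Ω] in
lemma setOf_sum_eq_preimage {u : ℕ} (hu : u ≤ n) :
    {ω | ∑ i ∈ range n, Y i ω = n - u}
      = (fun ω (i : ZMod n) => Y i.val ω) ⁻¹' {x | walk x n = u} := by
  ext ω
  have := reserve_eq_sub_walk (Y := Y) 0 (le_refl n) ω
  simp only [reserve] at this
  simp only [Set.mem_ofPred_eq, Set.mem_preimage]
  rw [← Nat.cast_inj (R := ℤ), Nat.cast_sum, Nat.cast_sub hu]
  omega

lemma map_eq_pi_of_isIID [NeZero n] {μ : Measure Ω} (hY : IsIID μ Y) :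
    μ.map (fun ω (i : ZMod n) => Y i.val ω) = Measure.pi fun _ => μ.map (Y 0) := by
  rw [(hY.2.1.precomp (g := ZMod.val) (ZMod.val_injective n)).map_fun_eq_pi_map
    fun i => (hY.1 _).aemeasurable]
  simp only [(hY.2.2 _).map_eq]

end DualRiskModel

/-- **Lemma 2 (hitting time law).** In the discrete-time dual risk model, for `u ≥ 1` and
`n ≥ u`, `P_u(τ* = n) = (u/n) · p^{*n}_{n-u}`. -/
theorem dual_ruin_time_law
    (μ : Measure Ω) [IsProbabilityMeasure μ] (Y : ℕ → Ω → ℕ) (hY : IsIID μ Y)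
    (u n : ℕ) (hu : 1 ≤ u) (hn : u ≤ n) :
    (μ (dualRuinAt Y (u : ℤ) n)).toReal = (u : ℝ) / (n : ℝ) * conv μ Y n (n - u) := by
  have : NeZero n := ⟨by omega⟩
  have hV : Measurable fun ω (i : ZMod n) => Y i.val ω := measurable_pi_lambda _ fun _ => hY.1 _
  have hlaw := map_eq_pi_of_isIID (n := n) hY
  have key := mul_measure_firstHit_eq (fun j => hlaw ▸ measurePreserving_rotate_pi _ j) hu
  rw [Measure.map_apply hV .of_discrete, Measure.map_apply hV .of_discrete,
    ← dualRuinAt_eq_preimage, ← setOf_sum_eq_preimage hn] at key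
  have hreal := congrArg ENNReal.toReal key
  simp only [ENNReal.toReal_mul, ENNReal.toReal_natCast] at hreal
  rw [conv, div_mul_eq_mul_div, eq_div_iff (Nat.cast_ne_zero.mpr (NeZero.ne n)), mul_comm, hreal]
end
end

section
/- In the discrete-time dual risk model started from R*_0 = −1, for n ∈ ℕ⁺ and k ∈ ℕ the joint distribution of the recovery time and the overshoot at recovery is P_{−1}(τ⁻ = n, R*_{τ⁻} = k) = ∑_{j=0}^{n−1} p^{*(n−1)}_j · p_{1+n−j+k} − ∑_{j=2}^{n−1} ∑_{i=2}^{j} ((n−j)/(n−i)) · p^{*(n−i)}_{j−i} · p^{*(i−1)}_i · p_{1+n−j+k}. -/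
open MeasureTheory ProbabilityTheory

noncomputable section

variable {Ω : Type*} [MeasurableSpace Ω]

/-!
Write `S_m = Y_0 + ⋯ + Y_{m-1}`. From `R*_0 = -1` the reserve is `S_m - m - 1`, so recovery at
time `m + 1` at level `k` means that `S_s ≤ s` for all `s ≤ m` and that the last gain is
`1 + (m + 1 - S_m) + k`. Conditioning on `S_m = j` reduces the claim to the law `q_m(j)` of
`S_m = j` with the path staying below the diagonal. Splitting off the last gain gives
`q_{m+1}(j) = ∑_y q_m(j - y) p_y`, and the closed form satisfies the same recursion; beyond
convolution, the only input is the size-bias identity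
`c p^{*(N+1)}_c = (N + 1) ∑_y y p_y p^{*N}_{c-y}`.
-/

open Finset

lemma measurableSet_of_dependsOn {Y : ℕ → Ω → ℕ} (hY : ∀ i, Measurable (Y i)) {s : Finset ℕ}
    {C : (ℕ → ℕ) → Prop} (hC : DependsOn C s) : MeasurableSet {ω | C (Y · ω)} := by
  obtain ⟨g, rfl⟩ := dependsOn_iff_exists_comp.mp hC
  exact measurable_pi_lambda (fun ω (i : (s : Set ℕ)) => Y i ω) (fun i => hY i)
    (Set.to_countable {v | g v}).measurableSet

namespace IsIID

variable {μ : Measure Ω} {Y : ℕ → Ω → ℕ}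

lemma measureReal_inter_eq_mul (hY : IsIID μ Y) {m : ℕ} {C : (ℕ → ℕ) → Prop}
    (hC : DependsOn C (range m)) (y : ℕ) :
    μ.real ({ω | C (Y · ω)} ∩ {ω | Y m ω = y}) =
      μ.real {ω | C (Y · ω)} * gainPMF μ Y y := by
  obtain ⟨g, rfl⟩ := dependsOn_iff_exists_comp.mp hC
  have hind := hY.2.1.indepFun_finset (range m) {m} (by simp) hY.1
  have hlaw := (hY.2.2 m).measure_mem_eq (measurableSet_singleton y)
  rw [gainPMF, measureReal_def, measureReal_def, ← ENNReal.toReal_mul]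
  exact congrArg ENNReal.toReal (hind.measure_inter_preimage_eq_mul {v | g v}
    {v | v ⟨m, mem_singleton_self m⟩ = y} (Set.to_countable _).measurableSet
    (Set.to_countable _).measurableSet |>.trans (congrArg _ hlaw))

lemma measureReal_biUnion_inter_eq_sum [IsFiniteMeasure μ] (hY : IsIID μ Y) {m : ℕ}
    (s : Finset ℕ) {C : ℕ → (ℕ → ℕ) → Prop} (hC : ∀ j, DependsOn (C j) (range m))
    {v : ℕ → ℕ} (hv : Set.InjOn v s) :
    μ.real (⋃ j ∈ s, {ω | C j (Y · ω)} ∩ {ω | Y m ω = v j}) =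
      ∑ j ∈ s, μ.real {ω | C j (Y · ω)} * gainPMF μ Y (v j) := by
  rw [measureReal_biUnion_finset]
  · exact sum_congr rfl fun j _ => hY.measureReal_inter_eq_mul (hC j) (v j)
  · intro j hj j' hj' hne
    exact Set.disjoint_left.mpr fun ω h h' => hne (hv hj hj' (h.2.symm.trans h'.2))
  · exact fun j _ =>
      (measurableSet_of_dependsOn hY.1 (hC j)).inter (hY.1 m (measurableSet_singleton _))

lemma dependsOn_sum_range_eq (m c : ℕ) :
    DependsOn (fun g : ℕ → ℕ => ∑ i ∈ range m, g i = c) (range m) := fun g g' h => by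
  simp only [sum_congr rfl fun i hi => h i hi]

lemma conv_succ [IsFiniteMeasure μ] (hY : IsIID μ Y) (m j : ℕ) :
    conv μ Y (m + 1) j = ∑ y ∈ range (j + 1), conv μ Y m (j - y) * gainPMF μ Y y := by
  have hset : {ω | ∑ i ∈ range (m + 1), Y i ω = j} =
      ⋃ y ∈ range (j + 1), {ω | ∑ i ∈ range m, Y i ω = j - y} ∩ {ω | Y m ω = y} := by
    ext ω
    simp only [sum_range_succ, Set.mem_ofPred_eq, Set.mem_iUnion, Set.mem_inter_iff, mem_range]
    constructor
    · intro h
      exact ⟨Y m ω, by omega, by omega, rfl⟩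
    · rintro ⟨y, hy, h, rfl⟩
      omega
  rw [conv, ← measureReal_def, hset]
  exact hY.measureReal_biUnion_inter_eq_sum _ (fun y => dependsOn_sum_range_eq m (j - y))
    fun _ _ _ _ h => h

end IsIID

def gainSeries (μ : Measure Ω) (Y : ℕ → Ω → ℕ) : PowerSeries ℝ :=
  PowerSeries.mk (gainPMF μ Y)

section Convolution

variable {μ : Measure Ω} {Y : ℕ → Ω → ℕ}

lemma conv_one_left (c : ℕ) : conv μ Y 1 c = gainPMF μ Y c := by
  simp [conv, gainPMF]

variable [IsProbabilityMeasure μ]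

lemma conv_zero_left (c : ℕ) : conv μ Y 0 c = if c = 0 then 1 else 0 := by
  split_ifs with hc <;> simp [conv, hc, eq_comm]

lemma IsIID.conv_eq_coeff_pow (hY : IsIID μ Y) (N c : ℕ) :
    conv μ Y N c = PowerSeries.coeff c (gainSeries μ Y ^ N) := by
  induction N generalizing c with
  | zero => rw [pow_zero, PowerSeries.coeff_one, conv_zero_left]
  | succ N ih =>
    rw [hY.conv_succ, pow_succ', PowerSeries.coeff_mul,
      Nat.sum_antidiagonal_eq_sum_range_succ fun a b =>
        PowerSeries.coeff a (gainSeries μ Y) * PowerSeries.coeff b (gainSeries μ Y ^ N)]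
    exact sum_congr rfl fun y _ => by rw [ih, gainSeries, PowerSeries.coeff_mk, mul_comm]

/-- Size-biasing: this is the chain rule `(P ^ (N + 1))' = (N + 1) P ^ N P'` for the generating
function `P` of the gains. -/
lemma IsIID.cast_mul_conv_succ (hY : IsIID μ Y) (N c : ℕ) :
    (c : ℝ) * conv μ Y (N + 1) c =
      (N + 1) * ∑ y ∈ range (c + 1), (y : ℝ) * gainPMF μ Y y * conv μ Y N (c - y) := by
  cases c with
  | zero => simp
  | succ c =>
    have hchain := congrArg (PowerSeries.coeff c)
      (PowerSeries.derivative_pow (gainSeries μ Y) (N + 1))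
    rw [PowerSeries.coeff_derivative, mul_assoc, ← map_natCast PowerSeries.C,
      mul_comm (gainSeries μ Y ^ _), PowerSeries.coeff_C_mul, PowerSeries.coeff_mul,
      Nat.sum_antidiagonal_eq_sum_range_succ fun a b =>
        PowerSeries.coeff a (PowerSeries.derivative ℝ (gainSeries μ Y)) *
          PowerSeries.coeff b (gainSeries μ Y ^ (N + 1 - 1))] at hchain
    rw [sum_range_succ', hY.conv_eq_coeff_pow, mul_comm, Nat.cast_succ, hchain]
    simp only [Nat.cast_zero, zero_mul, add_zero, Nat.add_sub_cancel, Nat.cast_succ,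
      Nat.succ_eq_add_one, Nat.add_sub_add_right, hY.conv_eq_coeff_pow,
      PowerSeries.coeff_derivative, gainSeries, PowerSeries.coeff_mk]
    exact congrArg _ (sum_congr rfl fun k _ => by ring)

end Convolution

def StaysBelowDiagonal (m j : ℕ) (g : ℕ → ℕ) : Prop :=
  ∑ i ∈ range m, g i = j ∧ ∀ s ≤ m, ∑ i ∈ range s, g i ≤ s

lemma dependsOn_staysBelowDiagonal (m j : ℕ) :
    DependsOn (StaysBelowDiagonal m j) (range m) := fun g g' h => by
  have hsum : ∀ s ≤ m, ∑ i ∈ range s, g i = ∑ i ∈ range s, g' i := fun s hs =>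
    sum_congr rfl fun i hi => h i (mem_coe.2 (mem_range.2 ((mem_range.1 hi).trans_le hs)))
  unfold StaysBelowDiagonal
  rw [hsum m le_rfl]
  exact propext (and_congr_right' (forall₂_congr fun s hs => by rw [hsum s hs]))

lemma not_staysBelowDiagonal_of_lt {m j : ℕ} (h : m < j) (g : ℕ → ℕ) :
    ¬ StaysBelowDiagonal m j g := fun ⟨hm, hle⟩ => by
  have := hle m le_rfl
  omega

lemma staysBelowDiagonal_zero (g : ℕ → ℕ) : StaysBelowDiagonal 0 0 g :=
  ⟨rfl, fun s hs => by simp [Nat.le_zero.mp hs]⟩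

lemma staysBelowDiagonal_succ_iff {m j : ℕ} (hj : j ≤ m + 1) (g : ℕ → ℕ) :
    StaysBelowDiagonal (m + 1) j g ↔
      ∃ y < j + 1, StaysBelowDiagonal m (j - y) g ∧ g m = y := by
  simp only [StaysBelowDiagonal, sum_range_succ]
  constructor
  · rintro ⟨hsum, hle⟩
    exact ⟨g m, by omega, ⟨by omega, fun s hs => hle s (by omega)⟩, rfl⟩
  · rintro ⟨y, hy, ⟨hsum, hle⟩, rfl⟩
    refine ⟨by omega, fun s hs => ?_⟩
    rcases Nat.lt_or_eq_of_le hs with hs | rfl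
    · exact hle s (by omega)
    · rw [sum_range_succ]
      omega

omit [MeasurableSpace Ω] in
lemma mem_recoveryAt_succ_iff {Y : ℕ → Ω → ℕ} {m k : ℕ} {ω : Ω} :
    ω ∈ recoveryAt Y (m + 1) k ↔
      ∃ j < m + 1, StaysBelowDiagonal m j (Y · ω) ∧ Y m ω = 1 + (m + 1 - j) + k := by
  have hcast (s : ℕ) : ∑ i ∈ range s, (Y i ω : ℤ) = ((∑ i ∈ range s, Y i ω : ℕ) : ℤ) := by
    push_cast; rfl
  simp only [recoveryAt, reserve, Set.mem_ofPred_eq, StaysBelowDiagonal, hcast, sum_range_succ]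
  constructor
  · rintro ⟨hrec, hneg⟩
    have hle : ∀ s < m + 1, ∑ i ∈ range s, Y i ω ≤ s := fun s hs => by
      have := hneg s hs
      omega
    have hm := hle m m.lt_succ_self
    exact ⟨_, Nat.lt_succ_of_le hm, ⟨rfl, fun s hs => hle s (by omega)⟩, by omega⟩
  · rintro ⟨j, hj, ⟨rfl, hle⟩, hm⟩
    exact ⟨by omega, fun s hs => by have := hle s (by omega); omega⟩

namespace IsIID

variable {μ : Measure Ω} [IsProbabilityMeasure μ] {Y : ℕ → Ω → ℕ}

lemma measureReal_staysBelowDiagonal_succ (hY : IsIID μ Y) {m j : ℕ} (hj : j ≤ m + 1) :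
    μ.real {ω | StaysBelowDiagonal (m + 1) j (Y · ω)} =
      ∑ y ∈ range (j + 1),
        μ.real {ω | StaysBelowDiagonal m (j - y) (Y · ω)} * gainPMF μ Y y := by
  have hset : {ω | StaysBelowDiagonal (m + 1) j (Y · ω)} =
      ⋃ y ∈ range (j + 1),
        {ω | StaysBelowDiagonal m (j - y) (Y · ω)} ∩ {ω | Y m ω = y} := by
    ext ω
    simp only [Set.mem_ofPred_eq, staysBelowDiagonal_succ_iff hj, Set.mem_iUnion,
      Set.mem_inter_iff, mem_range, exists_prop]
  rw [hset]
  exact hY.measureReal_biUnion_inter_eq_sum _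
    (fun y => dependsOn_staysBelowDiagonal m (j - y)) fun _ _ _ _ h => h

lemma measureReal_recoveryAt_succ (hY : IsIID μ Y) (m k : ℕ) :
    μ.real (recoveryAt Y (m + 1) k) =
      ∑ j ∈ range (m + 1), μ.real {ω | StaysBelowDiagonal m j (Y · ω)} *
        gainPMF μ Y (1 + (m + 1 - j) + k) := by
  have hset : recoveryAt Y (m + 1) k =
      ⋃ j ∈ range (m + 1),
        {ω | StaysBelowDiagonal m j (Y · ω)} ∩ {ω | Y m ω = 1 + (m + 1 - j) + k} := by
    ext ω
    simp only [mem_recoveryAt_succ_iff, Set.mem_iUnion, Set.mem_inter_iff, Set.mem_ofPred_eq,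
      mem_range, exists_prop]
  rw [hset]
  refine hY.measureReal_biUnion_inter_eq_sum _ (dependsOn_staysBelowDiagonal m) ?_
  intro j hj j' hj' h
  simp only [coe_range, Set.mem_Iio] at hj hj' h
  omega

end IsIID

/-- The path is at level `i` at time `i - 1` for the last time above the diagonal; by the ballot
theorem, `(M - j) / (M - i)` is the chance that the remaining `M - i` steps, of total `j - i`,
then stay below it. -/
def crossingTerm (μ : Measure Ω) (Y : ℕ → Ω → ℕ) (M i j : ℕ) : ℝ :=
  ((M - j : ℕ) : ℝ) / ((M - i : ℕ) : ℝ) * conv μ Y (M - i) (j - i) * conv μ Y (i - 1) i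

def belowDiagonalLaw (μ : Measure Ω) (Y : ℕ → Ω → ℕ) (m j : ℕ) : ℝ :=
  conv μ Y m j - ∑ i ∈ Icc 2 j, crossingTerm μ Y (m + 1) i j

section ClosedForm

variable {μ : Measure Ω} {Y : ℕ → Ω → ℕ}

lemma crossingTerm_self_left (M j : ℕ) : crossingTerm μ Y M M j = 0 := by
  simp [crossingTerm]

lemma crossingTerm_self_right (M i : ℕ) : crossingTerm μ Y M i M = 0 := by
  simp [crossingTerm]

lemma belowDiagonalLaw_succ_right (m : ℕ) :
    belowDiagonalLaw μ Y m (m + 1) = conv μ Y m (m + 1) := by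
  simp [belowDiagonalLaw, crossingTerm_self_right]

variable [IsProbabilityMeasure μ]

lemma sum_Icc_crossingTerm_succ (m : ℕ) :
    ∑ i ∈ Icc 2 (m + 1), crossingTerm μ Y (m + 2) i (m + 1) =
      ∑ i ∈ Icc 2 m, crossingTerm μ Y (m + 2) i (m + 1) +
        conv μ Y m (m + 1) * gainPMF μ Y 0 := by
  cases m with
  | zero => simp [conv_zero_left]
  | succ m =>
    rw [sum_Icc_succ_top (by omega), crossingTerm]
    simp [conv_one_left, mul_comm]

namespace IsIID

lemma sum_ballot_mul_gainPMF (hY : IsIID μ Y) {a c : ℕ} (hac : 0 < a + c) :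
    ∑ y ∈ range (c + 1),
        ((a + y : ℕ) : ℝ) / ((a + c : ℕ) : ℝ) * conv μ Y (a + c) (c - y) * gainPMF μ Y y =
      ((a + 1 : ℕ) : ℝ) / ((a + c + 1 : ℕ) : ℝ) * conv μ Y (a + c + 1) c := by
  have hsplit : ∑ y ∈ range (c + 1),
        ((a + y : ℕ) : ℝ) / ((a + c : ℕ) : ℝ) * conv μ Y (a + c) (c - y) * gainPMF μ Y y =
      a / ((a + c : ℕ) : ℝ) *
          ∑ y ∈ range (c + 1), conv μ Y (a + c) (c - y) * gainPMF μ Y y +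
        1 / ((a + c : ℕ) : ℝ) *
          ∑ y ∈ range (c + 1), (y : ℝ) * gainPMF μ Y y * conv μ Y (a + c) (c - y) := by
    rw [mul_sum, mul_sum, ← sum_add_distrib]
    exact sum_congr rfl fun y _ => by push_cast; ring
  have hsize := hY.cast_mul_conv_succ (a + c) c
  have hpos : (0 : ℝ) < a + c := by exact_mod_cast hac
  rw [hsplit, ← hY.conv_succ]
  push_cast at hsize ⊢
  field_simp
  linear_combination -hsize

lemma sum_crossingTerm_mul_gainPMF (hY : IsIID μ Y) {m i j : ℕ} (him : i ≤ m) (hij : i ≤ j)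
    (hjm : j ≤ m + 1) :
    ∑ y ∈ range (j - i + 1), crossingTerm μ Y (m + 1) i (j - y) * gainPMF μ Y y =
      crossingTerm μ Y (m + 2) i j := by
  obtain ⟨c, rfl⟩ := Nat.exists_eq_add_of_le hij
  obtain ⟨a, ha⟩ := Nat.exists_eq_add_of_le hjm
  have hterm : ∀ y ∈ range (c + 1), crossingTerm μ Y (m + 1) i (i + c - y) * gainPMF μ Y y =
      ((a + y : ℕ) : ℝ) / ((a + c : ℕ) : ℝ) * conv μ Y (a + c) (c - y) * gainPMF μ Y y *
        conv μ Y (i - 1) i := fun y hy => by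
    have hyc := mem_range_succ_iff.mp hy
    rw [crossingTerm, show m + 1 - (i + c - y) = a + y by omega, show m + 1 - i = a + c by omega,
      show i + c - y - i = c - y by omega]
    ring
  rw [Nat.add_sub_cancel_left, sum_congr rfl hterm, ← sum_mul,
    hY.sum_ballot_mul_gainPMF (by omega), crossingTerm, show m + 2 - (i + c) = a + 1 by omega,
    show m + 2 - i = a + c + 1 by omega, Nat.add_sub_cancel_left]

lemma sum_belowDiagonalLaw_mul_gainPMF (hY : IsIID μ Y) {m j : ℕ} (hj : j ≤ m + 1) :
    ∑ y ∈ range (j + 1), belowDiagonalLaw μ Y m (j - y) * gainPMF μ Y y =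
      conv μ Y (m + 1) j - ∑ i ∈ Icc 2 (min j m), crossingTerm μ Y (m + 2) i j := by
  simp only [belowDiagonalLaw, sub_mul, sum_sub_distrib, ← hY.conv_succ, sum_mul]
  rw [sum_comm' (t' := Icc 2 j) (s' := fun i => range (j - i + 1)) (fun y i => by
    simp only [mem_range, mem_Icc]; omega)]
  rw [← sum_subset (Icc_subset_Icc_right (min_le_left j m)) fun i hi hi' => ?_]
  · refine congrArg _ (sum_congr rfl fun i hi => ?_)
    obtain ⟨-, hij⟩ := mem_Icc.mp hi
    exact hY.sum_crossingTerm_mul_gainPMF (hij.trans (min_le_right j m))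
      (hij.trans (min_le_left j m)) hj
  · obtain rfl : i = m + 1 := by simp only [mem_Icc] at hi hi'; omega
    exact sum_eq_zero fun y _ => by rw [crossingTerm_self_left, zero_mul]

theorem measureReal_staysBelowDiagonal (hY : IsIID μ Y) {m j : ℕ} (hj : j ≤ m) :
    μ.real {ω | StaysBelowDiagonal m j (Y · ω)} = belowDiagonalLaw μ Y m j := by
  induction m generalizing j with
  | zero =>
    obtain rfl := Nat.le_zero.mp hj
    simp [staysBelowDiagonal_zero, belowDiagonalLaw, conv_zero_left]
  | succ m ih =>
    have hlaw := hY.sum_belowDiagonalLaw_mul_gainPMF hj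
    rw [hY.measureReal_staysBelowDiagonal_succ hj]
    rcases Nat.lt_or_eq_of_le hj with hjm | rfl
    · rw [sum_congr rfl fun y _ => by rw [ih (by omega)], hlaw, min_eq_left (by omega),
        belowDiagonalLaw]
    · -- `q_m(m + 1) = 0`, while the closed form gives `p^{*m}_{m+1}` there; the surplus
      -- `p^{*m}_{m+1} p_0` is the crossing term `i = m + 1` at time `m + 1`.
      have hempty : {ω | StaysBelowDiagonal m (m + 1) (Y · ω)} = ∅ :=
        Set.eq_empty_iff_forall_notMem.mpr fun ω => not_staysBelowDiagonal_of_lt m.lt_succ_self _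
      rw [sum_range_succ'] at hlaw ⊢
      rw [Nat.sub_zero, belowDiagonalLaw_succ_right] at hlaw
      rw [Nat.sub_zero, hempty, measureReal_empty, zero_mul, add_zero,
        sum_congr rfl fun y _ => by rw [ih (by omega)], eq_sub_of_add_eq hlaw, belowDiagonalLaw,
        sum_Icc_crossingTerm_succ, min_eq_right (by omega)]
      ring

end IsIID

end ClosedForm

/-- **Lemma 1 (joint law of recovery time and overshoot).** Starting from `R*_0 = -1`,
for `n ≥ 1` and `k ∈ ℕ`,
`P_{-1}(τ⁻ = n, R*_{τ⁻} = k)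
  = ∑_{j=0}^{n-1} p^{*(n-1)}_j p_{1+n-j+k}
    - ∑_{j=2}^{n-1} ∑_{i=2}^{j} ((n-j)/(n-i)) p^{*(n-i)}_{j-i} p^{*(i-1)}_i p_{1+n-j+k}`. -/
theorem recovery_joint_law
    (μ : Measure Ω) [IsProbabilityMeasure μ] (Y : ℕ → Ω → ℕ) (hY : IsIID μ Y)
    (n k : ℕ) (hn : 1 ≤ n) :
    (μ (recoveryAt Y n k)).toReal
      = (∑ j ∈ Finset.range n, conv μ Y (n - 1) j * gainPMF μ Y (1 + (n - j) + k))
        - ∑ j ∈ Finset.Icc 2 (n - 1), ∑ i ∈ Finset.Icc 2 j,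
            ((n - j : ℕ) : ℝ) / ((n - i : ℕ) : ℝ) * conv μ Y (n - i) (j - i)
              * conv μ Y (i - 1) i * gainPMF μ Y (1 + (n - j) + k) := by
  obtain ⟨m, rfl⟩ := Nat.exists_eq_add_of_le' hn
  have hterm : ∀ j ∈ range (m + 1),
      μ.real {ω | StaysBelowDiagonal m j (Y · ω)} * gainPMF μ Y (1 + (m + 1 - j) + k) =
        conv μ Y m j * gainPMF μ Y (1 + (m + 1 - j) + k) -
          ∑ i ∈ Icc 2 j, crossingTerm μ Y (m + 1) i j * gainPMF μ Y (1 + (m + 1 - j) + k) :=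
    fun j hj => by
      rw [hY.measureReal_staysBelowDiagonal (mem_range_succ_iff.mp hj), belowDiagonalLaw,
        sub_mul, sum_mul]
  rw [← measureReal_def, hY.measureReal_recoveryAt_succ, sum_congr rfl hterm, sum_sub_distrib,
    Nat.add_sub_cancel]
  congr 1
  refine (sum_subset (fun j hj => mem_range_succ_iff.mpr (mem_Icc.mp hj).2)
    fun j hjm hj => ?_).symm
  rw [Icc_eq_empty fun h2 => hj (mem_Icc.mpr ⟨h2, mem_range_succ_iff.mp hjm⟩), sum_empty]
end
end

section
/- In the discrete-time dual risk model with delay r ∈ ℕ⁺ and initial capital u ∈ ℕ, for every horizon t > u + r + 1 the finite-time Parisian ruin probability satisfies ψ*_r(u,t) = ∑_{k=u}^{t−r−2} P_u(τ* = k) · ψ*_r(0, t−k). -/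
open MeasureTheory ProbabilityTheory

/-!
Split at the first hitting time `τ* = k` of level `0`: since a Parisian window starts right
after a visit to `0`, it can only start after `τ*`, so Parisian ruin before `t` is the disjoint
union over `k` of `{τ* = k}` and the event that the reserve restarted from `0` at time `k` is
Parisian-ruined within `t - k` periods. The first event is determined by the gains before `k`,
the second by the gains from `k` on; these are independent, and by the i.i.d. property the
shifted gain sequence has the same law as the original one.
-/

section SamplePaths

variable {Ω : Type*} {Y : ℕ → Ω → ℕ} {ω : Ω}

def parisianRuinEvent (Y : ℕ → Ω → ℕ) (u : ℤ) (r t : ℕ) : Set Ω :=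
  {ω | ∃ s, parisianWindow Y u r s ω ∧ s + r < t}

lemma reserve_add (Y : ℕ → Ω → ℕ) (u : ℤ) (k m : ℕ) (ω : Ω) :
    reserve Y u (k + m) ω = reserve Y u k ω + reserve (fun i => Y (k + i)) 0 m ω := by
  simp only [reserve, Finset.sum_range_add]
  push_cast
  ring

lemma reserve_congr {Y' : ℕ → Ω → ℕ} {ω' : Ω} {u : ℤ} {n : ℕ}
    (h : ∀ i < n, Y i ω = Y' i ω') : reserve Y u n ω = reserve Y' u n ω' := by
  unfold reserve
  rw [Finset.sum_congr rfl fun i hi => congrArg ((↑) : ℕ → ℤ) (h i (Finset.mem_range.1 hi))]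

lemma le_of_reserve_eq_zero {u n : ℕ} (h : reserve Y u n ω = 0) : u ≤ n := by
  have hgains : (0 : ℤ) ≤ ∑ i ∈ Finset.range n, (Y i ω : ℤ) :=
    Finset.sum_nonneg fun i _ => Int.natCast_nonneg _
  unfold reserve at h
  omega

lemma exists_mem_dualRuinAt {u : ℤ} {n : ℕ} (h : reserve Y u n ω = 0) :
    ∃ k ≤ n, ω ∈ dualRuinAt Y u k := by
  have hex : ∃ n, reserve Y u n ω = 0 := ⟨n, h⟩
  exact ⟨Nat.find hex, Nat.find_le h, Nat.find_spec hex, fun m hm => Nat.find_min hex hm⟩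

lemma pairwise_disjoint_dualRuinAt (u : ℤ) :
    Pairwise (Function.onFun Disjoint (dualRuinAt Y u)) := by
  intro k l hkl
  refine Set.disjoint_left.2 fun ω hk hl => ?_
  rcases hkl.lt_or_gt with h | h
  · exact hl.2 k h hk.1
  · exact hk.2 l h hl.1

lemma parisianWindow_shift_iff {u : ℤ} {k r s : ℕ} (hk : reserve Y u k ω = 0) (hs : 1 ≤ s) :
    parisianWindow (fun i => Y (k + i)) 0 r s ω ↔ parisianWindow Y u r (k + s) ω := by
  have hR (m : ℕ) : reserve (fun i => Y (k + i)) 0 m ω = reserve Y u (k + m) ω := by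
    rw [reserve_add, hk, zero_add]
  have hpred : k + s - 1 = k + (s - 1) := by omega
  simp only [parisianWindow, hR, hpred]
  constructor
  · rintro ⟨-, h0, h1, hneg⟩
    refine ⟨by omega, h0, h1, fun m hm hm' => ?_⟩
    obtain ⟨j, rfl⟩ := Nat.exists_eq_add_of_le (le_trans (Nat.le_add_right k s) hm)
    exact hneg j (by omega) (by omega)
  · rintro ⟨-, h0, h1, hneg⟩
    exact ⟨hs, h0, h1, fun m hm hm' => hneg (k + m) (by omega) (by omega)⟩

lemma parisianRuinEvent_eq_biUnion (u r t : ℕ) :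
    parisianRuinEvent Y u r t = ⋃ k ∈ Finset.Icc u (t - r - 2),
      dualRuinAt Y u k ∩ parisianRuinEvent (fun i => Y (k + i)) 0 r (t - k) := by
  ext ω
  simp only [parisianRuinEvent, Set.mem_ofPred_eq, Set.mem_iUnion, Set.mem_inter_iff,
    Finset.mem_Icc, exists_prop]
  constructor
  · rintro ⟨s, hw, hst⟩
    obtain ⟨k, hks, hk⟩ := exists_mem_dualRuinAt hw.2.1
    have hku := le_of_reserve_eq_zero hk.1
    have hs := hw.1
    refine ⟨k, ⟨hku, by omega⟩, hk, s - k, ?_, by omega⟩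
    rwa [parisianWindow_shift_iff hk.1 (by omega), Nat.add_sub_cancel' (by omega)]
  · rintro ⟨k, -, hk, s, hw, hst⟩
    exact ⟨k + s, (parisianWindow_shift_iff hk.1 hw.1).1 hw, by omega⟩

lemma dualRuinAt_eq_preimage_image (u : ℤ) (k : ℕ) :
    (fun ω (i : Fin k) => Y i ω) ⁻¹' ((fun ω (i : Fin k) => Y i ω) '' dualRuinAt Y u k)
      = dualRuinAt Y u k := by
  refine (Set.subset_preimage_image _ _).antisymm' ?_
  rintro ω ⟨ω', ⟨h0, hne⟩, heq⟩
  have hR {m : ℕ} (hm : m ≤ k) : reserve Y u m ω' = reserve Y u m ω :=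
    reserve_congr fun i hi => congrFun heq ⟨i, by omega⟩
  exact ⟨hR le_rfl ▸ h0, fun m hm => hR hm.le ▸ hne m hm⟩

end SamplePaths

/-- Events of the model with gains `Y` are, definitionally, preimages under `ω ↦ (Y n ω)ₙ` of
the same events for the coordinate process on path space. -/
def coordProcess : ℕ → (ℕ → ℕ) → ℕ := fun i y => y i

lemma measurable_reserve_coordProcess (u : ℤ) (n : ℕ) :
    Measurable (reserve coordProcess u n) := by
  unfold reserve coordProcess
  fun_prop

lemma measurableSet_dualRuinAt_coordProcess (u : ℤ) (k : ℕ) :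
    MeasurableSet (dualRuinAt coordProcess u k) := by
  have := measurable_reserve_coordProcess u
  unfold dualRuinAt
  measurability

lemma measurableSet_parisianRuinEvent_coordProcess (u : ℤ) (r t : ℕ) :
    MeasurableSet (parisianRuinEvent coordProcess u r t) := by
  have := measurable_reserve_coordProcess u
  unfold parisianRuinEvent parisianWindow
  measurability

section IID

variable {Ω : Type*} [MeasurableSpace Ω] {μ : Measure Ω} {Y : ℕ → Ω → ℕ}

lemma ProbabilityTheory.iIndepFun.indepFun_prefix_shift (hY : iIndepFun Y μ)
    (hm : ∀ i, Measurable (Y i)) (k : ℕ) :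
    IndepFun (fun ω (i : Fin k) => Y i ω) (fun ω n => Y (k + n) ω) μ := by
  have hle {ι : Type} (g : ι → ℕ) (S : Set ℕ) (hg : ∀ i, g i ∈ S) :
      MeasurableSpace.comap (fun ω i => Y (g i) ω) MeasurableSpace.pi
        ≤ ⨆ n ∈ S, MeasurableSpace.comap (Y n) inferInstance := by
    rw [MeasurableSpace.pi, MeasurableSpace.comap_iSup]
    refine iSup_le fun i => ?_
    rw [MeasurableSpace.comap_comp]
    exact le_iSup₂_of_le (g i) (hg i) le_rfl
  rw [IndepFun_iff_Indep]
  exact indep_of_indep_of_le (indep_iSup_of_disjoint (fun i => (hm i).comap_le) hY.iIndep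
    (Set.Iio_disjoint_Ici le_rfl)) (hle (fun i : Fin k => i) _ fun i => i.2)
    (hle (k + ·) _ fun n => Nat.le_add_right k n)

lemma IsIID.map_shift [IsProbabilityMeasure μ] (hY : IsIID μ Y) (k : ℕ) :
    μ.map (fun ω n => Y (k + n) ω) = μ.map (fun ω n => Y n ω) := by
  rw [(hY.2.1.precomp (add_right_injective k)).map_fun_eq_infinitePi_map (fun n => hY.1 _),
    hY.2.1.map_fun_eq_infinitePi_map hY.1]
  simp only [(hY.2.2 _).map_eq]

lemma IsIID.measure_prefix_inter_shift [IsProbabilityMeasure μ] (hY : IsIID μ Y) (k : ℕ)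
    (S : Set (Fin k → ℕ)) {E : Set (ℕ → ℕ)} (hE : MeasurableSet E) :
    μ ((fun ω (i : Fin k) => Y i ω) ⁻¹' S ∩ (fun ω n => Y (k + n) ω) ⁻¹' E)
      = μ ((fun ω (i : Fin k) => Y i ω) ⁻¹' S) * μ ((fun ω n => Y n ω) ⁻¹' E) := by
  rw [(hY.2.1.indepFun_prefix_shift hY.1 k).measure_inter_preimage_eq_mul _ _
      S.to_countable.measurableSet hE,
    ← Measure.map_apply (measurable_pi_lambda _ fun n => hY.1 _) hE, hY.map_shift,
    Measure.map_apply (measurable_pi_lambda _ hY.1) hE]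

lemma IsIID.measure_dualRuinAt_inter_shift [IsProbabilityMeasure μ] (hY : IsIID μ Y)
    (u : ℤ) (k : ℕ) {E : Set (ℕ → ℕ)} (hE : MeasurableSet E) :
    μ (dualRuinAt Y u k ∩ (fun ω n => Y (k + n) ω) ⁻¹' E)
      = μ (dualRuinAt Y u k) * μ ((fun ω n => Y n ω) ⁻¹' E) := by
  rw [← dualRuinAt_eq_preimage_image]
  exact hY.measure_prefix_inter_shift k _ hE

end IID

variable {Ω : Type*} [MeasurableSpace Ω]

theorem parisian_ruin_finite_time_general
    (μ : Measure Ω) [IsProbabilityMeasure μ] (Y : ℕ → Ω → ℕ) (hY : IsIID μ Y)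
    (u r t : ℕ) :
    parisianRuinBy μ Y (u : ℤ) r t
      = ∑ k ∈ Finset.Icc u (t - r - 2),
          (μ (dualRuinAt Y (u : ℤ) k)).toReal * parisianRuinBy μ Y 0 r (t - k) := by
  set A := fun k => dualRuinAt Y u k ∩ parisianRuinEvent (fun i => Y (k + i)) 0 r (t - k)
  have hA (k : ℕ) : MeasurableSet (A k) :=
    (measurable_pi_lambda _ hY.1 (measurableSet_dualRuinAt_coordProcess u k)).inter
      (measurable_pi_lambda _ (fun n => hY.1 (k + n))
        (measurableSet_parisianRuinEvent_coordProcess 0 r (t - k)))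
  have hdisj : (Finset.Icc u (t - r - 2) : Set ℕ).PairwiseDisjoint A := fun k _ l _ hkl =>
    (pairwise_disjoint_dualRuinAt u hkl).mono Set.inter_subset_left Set.inter_subset_left
  change (μ (parisianRuinEvent Y u r t)).toReal = _
  rw [parisianRuinEvent_eq_biUnion, measure_biUnion_finset hdisj fun k _ => hA k,
    ENNReal.toReal_sum fun k _ => measure_ne_top μ _]
  refine Finset.sum_congr rfl fun k _ => ?_
  rw [parisianRuinBy, ← ENNReal.toReal_mul]
  exact congrArg ENNReal.toReal (hY.measure_dualRuinAt_inter_shift u k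
    (measurableSet_parisianRuinEvent_coordProcess 0 r (t - k)))

/-- **Theorem 1 (finite-time Parisian ruin recursion).** For `t > u + r + 1`,
`ψ*_r(u,t) = ∑_{k=u}^{t-r-2} P_u(τ* = k) ψ*_r(0, t-k)`. -/
theorem parisian_ruin_finite_time
    (μ : Measure Ω) [IsProbabilityMeasure μ] (Y : ℕ → Ω → ℕ) (hY : IsIID μ Y)
    (u r t : ℕ) (hr : 1 ≤ r) (ht : u + r + 1 < t) :
    parisianRuinBy μ Y (u : ℤ) r t
      = ∑ k ∈ Finset.Icc u (t - r - 2),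
          (μ (dualRuinAt Y (u : ℤ) k)).toReal * parisianRuinBy μ Y 0 r (t - k) :=
  parisian_ruin_finite_time_general μ Y hY u r t
end

section
/- In the discrete-time dual risk model with delay r ∈ ℕ⁺ and initial capital 0, the finite-time Parisian survival probability at horizon r + 2 equals φ*_r(0, r+2) = 1 − p_0 · φ(1, r+1), where φ(1, r+1) is the finite-time survival probability of the compound binomial risk process started at 1 over horizon r + 1. -/
/-!
Started from `0`, a Parisian window closing before time `r + 2` must open with the
down-crossing at time `1`, i.e. with a zero first gain `Y 0` (the paper's `Y_1`). The reserve
then stays negative through time `r + 1` exactly when no partial sum of `Y 1, …, Y r` exceeds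
its number of terms, which is the survival event of the compound binomial process started at
`1`, written for the shifted gains. Since `Y 0` is independent of the shifted gains and these
have the same joint law as `Y 0, …, Y (r - 1)`, the ruin probability factorizes as
`p_0 φ(1, r + 1)`.
-/

open MeasureTheory ProbabilityTheory

noncomputable section

variable {Ω : Type*} [MeasurableSpace Ω]

def gainWindow (Y : ℕ → Ω → ℕ) (a r : ℕ) (ω : Ω) (i : Fin r) : ℕ := Y (a + i) ω

/-- Gain vectors `x` for which the compound binomial process `1 + n - (x 0 + ⋯ + x (n - 1))`
stays positive for `n ≤ r`. -/
def survivalSet (r : ℕ) : Set (Fin r → ℕ) :=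
  {x | ∀ n (hn : n ≤ r), ∑ i : Fin n, x (Fin.castLE hn i) ≤ n}

omit [MeasurableSpace Ω] in
theorem gainWindow_mem_survivalSet {Y : ℕ → Ω → ℕ} {a r : ℕ} {ω : Ω} :
    gainWindow Y a r ω ∈ survivalSet r ↔
      ∀ n ≤ r, ∑ i ∈ Finset.range n, (Y (a + i) ω : ℤ) ≤ n := by
  refine forall₂_congr fun n hn => ?_
  rw [← Nat.cast_sum, Nat.cast_le, ← Fin.sum_univ_eq_sum_range (fun i => Y (a + i) ω)]
  rfl

theorem IsIID.identDistrib_gainWindow {μ : Measure Ω} {Y : ℕ → Ω → ℕ} (hY : IsIID μ Y)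
    (a r : ℕ) : IdentDistrib (gainWindow Y a r) (gainWindow Y 0 r) μ μ := by
  have hwin : ∀ b, iIndepFun (fun i : Fin r => Y (b + i)) μ := fun b =>
    hY.2.1.precomp ((add_right_injective b).comp Fin.val_injective)
  refine ⟨(measurable_pi_lambda _ fun i => hY.1 _).aemeasurable,
    (measurable_pi_lambda _ fun i => hY.1 _).aemeasurable, ?_⟩
  change μ.map (fun ω (i : Fin r) => Y (a + i) ω) = μ.map (fun ω (i : Fin r) => Y (0 + i) ω)
  rw [(hwin a).map_fun_eq_pi_map fun i => (hY.1 _).aemeasurable,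
    (hwin 0).map_fun_eq_pi_map fun i => (hY.1 _).aemeasurable]
  congr with i : 1
  exact (hY.2.2 _).map_eq.trans (hY.2.2 _).map_eq.symm

theorem IsIID.indepFun_gainWindow_one {μ : Measure Ω} {Y : ℕ → Ω → ℕ} (hY : IsIID μ Y)
    (r : ℕ) : IndepFun (Y 0) (gainWindow Y 1 r) μ := by
  have h := hY.2.1.indepFun_finset {0} (Finset.Ico 1 (1 + r)) (by simp) hY.1
  exact h.comp (_mγ := inferInstance) (_mγ' := inferInstance)
    (φ := fun x => x ⟨0, Finset.mem_singleton_self 0⟩)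
    (ψ := fun x (i : Fin r) => x ⟨1 + i, by simp [i.isLt]⟩) (measurable_pi_apply _)
    (measurable_pi_lambda _ fun i => measurable_pi_apply _)

theorem IsIID.measure_inter_gainWindow_one {μ : Measure Ω} {Y : ℕ → Ω → ℕ} (hY : IsIID μ Y)
    (k r : ℕ) (S : Set (Fin r → ℕ)) :
    μ ({ω | Y 0 ω = k} ∩ gainWindow Y 1 r ⁻¹' S)
      = μ {ω | Y 0 ω = k} * μ (gainWindow Y 0 r ⁻¹' S) := by
  rw [← (hY.identDistrib_gainWindow 1 r).measure_mem_eq S.to_countable.measurableSet]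
  exact (hY.indepFun_gainWindow_one r).measure_inter_preimage_eq_mul {k} S
    (measurableSet_singleton k) S.to_countable.measurableSet

omit [MeasurableSpace Ω] in
theorem reserve_succ (Y : ℕ → Ω → ℕ) (u : ℤ) (n : ℕ) (ω : Ω) :
    reserve Y u (n + 1) ω = u - 1 + Y 0 ω - n + ∑ i ∈ Finset.range n, (Y (1 + i) ω : ℤ) := by
  simp only [reserve, Finset.sum_range_succ', add_comm 1]
  push_cast
  ring

omit [MeasurableSpace Ω] in
theorem classicalSurvival_one_event_eq (Y : ℕ → Ω → ℕ) (r : ℕ) :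
    {ω | ∀ n < r + 1, 0 < ((1 : ℕ) : ℤ) + n - ∑ i ∈ Finset.range n, (Y i ω : ℤ)}
      = gainWindow Y 0 r ⁻¹' survivalSet r := by
  ext ω
  simp only [Set.mem_ofPred_eq, Set.mem_preimage, gainWindow_mem_survivalSet, zero_add,
    Nat.lt_succ_iff, Nat.cast_one]
  exact forall₂_congr fun n _ => by omega

omit [MeasurableSpace Ω] in
theorem parisianRuinBy_zero_event_eq (Y : ℕ → Ω → ℕ) (r : ℕ) :
    {ω | ∃ s, parisianWindow Y 0 r s ω ∧ s + r < r + 2}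
      = {ω | Y 0 ω = 0} ∩ gainWindow Y 1 r ⁻¹' survivalSet r := by
  ext ω
  simp only [Set.mem_ofPred_eq, Set.mem_inter_iff, Set.mem_preimage, gainWindow_mem_survivalSet]
  have hdown : reserve Y 0 1 ω = -1 ↔ Y 0 ω = 0 := by simp [reserve_succ]
  constructor
  · rintro ⟨s, ⟨hs, -, hs_down, hneg⟩, hlt⟩
    obtain rfl : s = 1 := by omega
    have hY0 := hdown.mp hs_down
    refine ⟨hY0, fun n hn => ?_⟩
    have h := hneg (n + 1) (by omega) (by omega)
    rw [reserve_succ, hY0] at h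
    omega
  · rintro ⟨hY0, hsums⟩
    refine ⟨1, ⟨le_rfl, by simp [reserve], hdown.mpr hY0, fun m hm hmr => ?_⟩, by omega⟩
    obtain ⟨n, rfl⟩ : ∃ n, m = n + 1 := ⟨m - 1, by omega⟩
    rw [reserve_succ, hY0]
    have := hsums n (by omega)
    omega

theorem parisian_survival_step1_general
    (μ : Measure Ω) (Y : ℕ → Ω → ℕ) (hY : IsIID μ Y)
    (r : ℕ) :
    1 - parisianRuinBy μ Y 0 r (r + 2)
      = 1 - gainPMF μ Y 0 * classicalSurvival μ Y 1 (r + 1) := by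
  rw [parisianRuinBy, parisianRuinBy_zero_event_eq, hY.measure_inter_gainWindow_one,
    ENNReal.toReal_mul, gainPMF, classicalSurvival, classicalSurvival_one_event_eq]

/-- **Step 1.** The finite-time Parisian survival probability with zero initial reserve at
horizon `r + 2` satisfies `φ*_r(0, r+2) = 1 - p_0 φ(1, r+1)`. -/
theorem parisian_survival_step1
    (μ : Measure Ω) [IsProbabilityMeasure μ] (Y : ℕ → Ω → ℕ) (hY : IsIID μ Y)
    (r : ℕ) (hr : 1 ≤ r) :
    1 - parisianRuinBy μ Y 0 r (r + 2)
      = 1 - gainPMF μ Y 0 * classicalSurvival μ Y 1 (r + 1) :=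
  parisian_survival_step1_general μ Y hY r
end
end

section
/- In the discrete-time dual risk model with delay r ∈ ℕ⁺ and initial capital 0, the finite-time Parisian survival probability at horizon r + 3 equals φ*_r(0, r+3) = 1 − (1 + p_1) · p_0 · φ(1, r+1), where φ(1, r+1) is the finite-time survival probability of the compound binomial risk process started at 1 over horizon r + 1. -/
open MeasureTheory ProbabilityTheory

noncomputable section

variable {Ω : Type*} [MeasurableSpace Ω]

/-!
Started at `0`, Parisian ruin before time `r + 3` needs a down-crossing at time `1` (when
`Y 0 = 0`) or at time `2` (when `Y 0 = 1` and `Y 1 = 0`). Either way the reserve then sits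
at `-1`, and staying negative for `r` more periods says that the shifted gains keep the compound
binomial process started at `1` positive up to time `r`. The first gain is independent of the
shifted sequence, which has the law of the original one, so the two cases have probabilities
`p₀ φ(1, r+1)` and `p₁ p₀ φ(1, r+1)`.
-/

namespace ProbabilityTheory

variable {β : Type*} [MeasurableSpace β] {μ : Measure Ω} {X : ℕ → Ω → β}

lemma iIndepFun.indepFun_head_tail (hX : ∀ i, Measurable (X i)) (hind : iIndepFun X μ) :
    IndepFun (X 0) (fun ω i => X (i + 1) ω) μ := by
  have h := indep_iSup_of_disjoint (fun i => (hX i).comap_le)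
    (iIndepFun_iff_iIndep _ _ _ |>.1 hind) (S := {0}) (T := Set.Ici 1) (by simp)
  rw [IndepFun_iff_Indep]
  refine indep_of_indep_of_le h (le_iSup₂_of_le 0 rfl le_rfl) ?_
  rw [MeasurableSpace.comap_process_pi]
  exact iSup_le fun i => le_iSup₂_of_le (i + 1) (by simp) le_rfl

lemma iIndepFun.identDistrib_tail [IsProbabilityMeasure μ] (hX : ∀ i, Measurable (X i))
    (hind : iIndepFun X μ) (hid : ∀ i, IdentDistrib (X i) (X 0) μ μ) :
    IdentDistrib (fun ω i => X (i + 1) ω) (fun ω i => X i ω) μ μ where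
  aemeasurable_fst := (measurable_pi_lambda _ fun i => hX (i + 1)).aemeasurable
  aemeasurable_snd := (measurable_pi_lambda _ hX).aemeasurable
  map_eq := by
    rw [(hind.precomp (add_left_injective 1)).map_fun_eq_infinitePi_map (fun i => hX (i + 1)),
      hind.map_fun_eq_infinitePi_map hX]
    simp only [fun i => (hid i).map_eq]

lemma iIndepFun.measure_head_inter_tail [IsProbabilityMeasure μ] (hX : ∀ i, Measurable (X i))
    (hind : iIndepFun X μ) (hid : ∀ i, IdentDistrib (X i) (X 0) μ μ)
    {B : Set β} (hB : MeasurableSet B) {S : Set (ℕ → β)} (hS : MeasurableSet S) :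
    μ (X 0 ⁻¹' B ∩ (fun ω i => X (i + 1) ω) ⁻¹' S)
      = μ (X 0 ⁻¹' B) * μ ((fun ω i => X i ω) ⁻¹' S) := by
  rw [(hind.indepFun_head_tail hX).measure_inter_preimage_eq_mul _ _ hB hS,
    (hind.identDistrib_tail hX hid).measure_mem_eq hS]

end ProbabilityTheory

def survivalPaths (v t : ℕ) : Set (ℕ → ℕ) :=
  {y | ∀ n < t, 0 < (v : ℤ) + n - ∑ i ∈ Finset.range n, (y i : ℤ)}

lemma measurableSet_survivalPaths (v t : ℕ) : MeasurableSet (survivalPaths v t) := by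
  have h : ∀ n, Measurable fun y : ℕ → ℕ =>
      (v : ℤ) + n - ∑ i ∈ Finset.range n, (y i : ℤ) := fun n => by fun_prop
  simp only [survivalPaths, Set.ofPred_forall]
  exact MeasurableSet.iInter fun n => MeasurableSet.iInter fun _ =>
    h n (MeasurableSet.of_discrete (s := {z : ℤ | 0 < z}))

lemma classicalSurvival_eq (μ : Measure Ω) (Y : ℕ → Ω → ℕ) (v t : ℕ) :
    classicalSurvival μ Y v t = (μ ((fun ω i => Y i ω) ⁻¹' survivalPaths v t)).toReal :=
  rfl

omit [MeasurableSpace Ω] in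
lemma reserve_add_s5 (Y : ℕ → Ω → ℕ) (u : ℤ) (s n : ℕ) (ω : Ω) :
    reserve Y u (s + n) ω
      = reserve Y u s ω - n + ∑ i ∈ Finset.range n, (Y (i + s) ω : ℤ) := by
  rw [reserve, reserve, Finset.sum_range_add]
  push_cast
  simp only [Nat.add_comm s]
  ring

omit [MeasurableSpace Ω] in
lemma parisianWindow_succ_iff (Y : ℕ → Ω → ℕ) (u : ℤ) (r s : ℕ) (ω : Ω) :
    parisianWindow Y u r (s + 1) ω ↔
      reserve Y u s ω = 0 ∧ Y s ω = 0 ∧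
        (fun i => Y (i + (s + 1)) ω) ∈ survivalPaths 1 (r + 1) := by
  have hstep : reserve Y u (s + 1) ω = reserve Y u s ω - 1 + Y s ω := by
    simpa using reserve_add_s5 Y u s 1 ω
  have hwindow : (∀ m, s + 1 ≤ m → m ≤ s + 1 + r → reserve Y u m ω < 0) ↔
      ∀ n < r + 1,
        reserve Y u (s + 1) ω - n + ∑ i ∈ Finset.range n, (Y (i + (s + 1)) ω : ℤ) < 0 := by
    refine ⟨fun h n hn => reserve_add_s5 Y u (s + 1) n ω ▸ h _ (by omega) (by omega),
      fun h m h₁ h₂ => ?_⟩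
    obtain ⟨n, rfl⟩ := Nat.exists_eq_add_of_le h₁
    exact reserve_add_s5 Y u (s + 1) n ω ▸ h n (by omega)
  simp only [parisianWindow, survivalPaths, Set.mem_ofPred_eq, Nat.add_sub_cancel, hwindow, hstep,
    Nat.cast_one]
  constructor
  · rintro ⟨-, h₀, hdown, hneg⟩
    exact ⟨h₀, by omega, fun n hn => by linarith [hneg n hn]⟩
  · rintro ⟨h₀, hzero, hpos⟩
    exact ⟨by omega, h₀, by omega, fun n hn => by linarith [hpos n hn]⟩

omit [MeasurableSpace Ω] in
lemma parisianRuinByEvent_zero_add_three (Y : ℕ → Ω → ℕ) (r : ℕ) :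
    {ω | ∃ s, parisianWindow Y 0 r s ω ∧ s + r < r + 3}
      = Y 0 ⁻¹' {0} ∩ (fun ω i => Y (i + 1) ω) ⁻¹' survivalPaths 1 (r + 1) ∪
        Y 0 ⁻¹' {1} ∩ (fun ω i => Y (i + 1) ω) ⁻¹'
          {y | y 0 = 0 ∧ (fun i => y (i + 1)) ∈ survivalPaths 1 (r + 1)} := by
  ext ω
  constructor
  · rintro ⟨s, hwin, hs⟩
    obtain ⟨s, rfl⟩ := Nat.exists_eq_add_of_le' hwin.1
    rw [parisianWindow_succ_iff] at hwin
    have hs2 : s < 2 := by omega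
    interval_cases s
    · exact Or.inl hwin.2
    · refine Or.inr ⟨?_, hwin.2⟩
      have h := hwin.1
      simp only [reserve, Finset.sum_range_one] at h
      simp only [Set.mem_preimage, Set.mem_singleton_iff]
      omega
  · rintro (⟨h₀, hsurv⟩ | ⟨h₁, hsurv⟩)
    · refine ⟨1, (parisianWindow_succ_iff Y 0 r 0 ω).2 ⟨?_, h₀, hsurv⟩, by omega⟩
      simp [reserve]
    · refine ⟨2, (parisianWindow_succ_iff Y 0 r 1 ω).2 ⟨?_, hsurv⟩, by omega⟩
      simp_all [reserve]

lemma measure_parisianRuinByEvent_zero_add_three (μ : Measure Ω) [IsProbabilityMeasure μ]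
    (Y : ℕ → Ω → ℕ) (hY : IsIID μ Y) (r : ℕ) :
    μ {ω | ∃ s, parisianWindow Y 0 r s ω ∧ s + r < r + 3}
      = μ {ω | Y 0 ω = 0} * μ ((fun ω i => Y i ω) ⁻¹' survivalPaths 1 (r + 1))
        + μ {ω | Y 0 ω = 1} *
          (μ {ω | Y 0 ω = 0} * μ ((fun ω i => Y i ω) ⁻¹' survivalPaths 1 (r + 1))) := by
  obtain ⟨hmeas, hind, hid⟩ := hY
  have hS := measurableSet_survivalPaths 1 (r + 1)
  have hS' : MeasurableSet
      {y : ℕ → ℕ | y 0 = 0 ∧ (fun i => y (i + 1)) ∈ survivalPaths 1 (r + 1)} :=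
    (measurableSet_singleton 0).preimage (measurable_pi_apply 0) |>.inter <|
      hS.preimage (measurable_pi_lambda _ fun i => measurable_pi_apply (i + 1))
  have hfirst := fun k {T} (hT : MeasurableSet T) =>
    hind.measure_head_inter_tail hmeas hid (measurableSet_singleton k) hT
  have hsecond : (fun ω i => Y i ω) ⁻¹'
        {y : ℕ → ℕ | y 0 = 0 ∧ (fun i => y (i + 1)) ∈ survivalPaths 1 (r + 1)}
      = Y 0 ⁻¹' {0} ∩ (fun ω i => Y (i + 1) ω) ⁻¹' survivalPaths 1 (r + 1) := rfl
  have hdisj := (Set.disjoint_singleton.2 zero_ne_one).preimage (Y 0)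
  have hmeas_tail : Measurable fun ω i => Y (i + 1) ω :=
    measurable_pi_lambda _ fun i => hmeas (i + 1)
  rw [parisianRuinByEvent_zero_add_three,
    measure_union (hdisj.mono Set.inter_subset_left Set.inter_subset_left)
      (((measurableSet_singleton 1).preimage (hmeas 0)).inter (hS'.preimage hmeas_tail)),
    hfirst 1 hS', hsecond, hfirst 0 hS]
  rfl

theorem parisian_survival_step2_general
    (μ : Measure Ω) [IsProbabilityMeasure μ] (Y : ℕ → Ω → ℕ) (hY : IsIID μ Y)
    (r : ℕ) :
    1 - parisianRuinBy μ Y 0 r (r + 3)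
      = 1 - (1 + gainPMF μ Y 1) * gainPMF μ Y 0 * classicalSurvival μ Y 1 (r + 1) := by
  rw [parisianRuinBy, measure_parisianRuinByEvent_zero_add_three μ Y hY r, classicalSurvival_eq,
    gainPMF, gainPMF, ENNReal.toReal_add (by finiteness) (by finiteness)]
  simp only [ENNReal.toReal_mul]
  ring

/-- **Step 2.** The finite-time Parisian survival probability with zero initial reserve at
horizon `r + 3` satisfies `φ*_r(0, r+3) = 1 - (1 + p_1) p_0 φ(1, r+1)`. -/
theorem parisian_survival_step2
    (μ : Measure Ω) [IsProbabilityMeasure μ] (Y : ℕ → Ω → ℕ) (hY : IsIID μ Y)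
    (r : ℕ) (hr : 1 ≤ r) :
    1 - parisianRuinBy μ Y 0 r (r + 3)
      = 1 - (1 + gainPMF μ Y 1) * gainPMF μ Y 0 * classicalSurvival μ Y 1 (r + 1) :=
  parisian_survival_step2_general μ Y hY r
end
end
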